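/- Let $a, b \in \mathbb{R}$ with $a + b > 0$, and let $r \geq 1$. Suppose $g : (\mathbb{R}_{>0})^r \to \mathbb{C}$ satisfies $|g(x_1, \ldots, x_r)| \leq \prod_{i=1}^r \min(x_i^{a}, x_i^{-b})$. Let $\Lambda \subset \{(y_1,\ldots,y_r) \in (\mathbb{R}_{>0})^r : y_1 \cdots y_r = 1\}$ be a discrete cocompact subgroup of the multiplicative group $\{y : \prod y_i = 1\}$. Then for all $x \in (\mathbb{R}_{>0})^r$, $$\sum_{u \in \Lambda} |g(u_1 x_1, \ldots, u_r x_r)| \ll_{a, b, \Lambda} \big(1 + |\log(x_1 \cdots x_r)|^{r-1}\big) \min\big((x_1 \cdots x_r)^{a},\ (x_1 \cdots x_r)^{-b}\big).$$ -/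

import Mathlib

/-!
In logarithmic coordinates `t = log x`, with `T = ∑ tᵢ = log ∏ xᵢ` and `c = (a + b) / 2`, the
hypothesis on `g` reads `‖g (eᵘ x)‖ ≤ e^((a - b) T / 2) e^(-c ‖u + t‖₁)`, so it suffices to show
`∑_{u ∈ L} e^(-c ‖u + t‖₁) ≪ (1 + |T|^(r-1)) e^(-c |T|)`. Since `∑ (u + t)ᵢ = T`, we have
`‖u + t‖₁ ≥ |T|`; by cocompactness `t` lies within `R + |T|` of some `u₀ ∈ L`, so also
`‖u + t‖₁ ≥ ‖u + u₀‖ - R - |T|`. Hence each term is at most `e^(-c |T|) e^(-c max(0, ‖u + u₀‖ - ρ))`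
with `ρ = R + 2 |T|`. The lattice `L` lies in the hyperplane `∑ vᵢ = 0`, so its rank `d` is at
most `r - 1`, and the sum of `e^(-c max(0, ‖v‖ - ρ))` over `v ∈ L` is `O((1 + ρ)^d)`: the
`O((1 + ρ)^d)` points with `‖v‖ ≤ 2ρ` contribute at most `1` each, the others at most
`e^(-c ‖v‖ / 2)`.
-/

open Finset Module

theorem min_rpow_rpow_neg_eq_exp {a b y : ℝ} (hab : 0 ≤ a + b) (hy : 0 < y) :
    min (y ^ a) (y ^ (-b)) =
      Real.exp ((a - b) / 2 * Real.log y - (a + b) / 2 * |Real.log y|) := by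
  rw [Real.rpow_def_of_pos hy, Real.rpow_def_of_pos hy, ← Real.exp_monotone.map_min]
  congr 1
  rcases abs_cases (Real.log y) with ⟨h, hpos⟩ | ⟨h, hneg⟩
  · rw [min_eq_right (by nlinarith), h]; ring
  · rw [min_eq_left (by nlinarith), h]; ring

theorem prod_min_rpow_rpow_neg_eq_exp {ι : Type*} [Fintype ι] {a b : ℝ} (hab : 0 ≤ a + b)
    {y : ι → ℝ} (hy : ∀ i, 0 < y i) :
    ∏ i, min (y i ^ a) (y i ^ (-b)) = Real.exp ((a - b) / 2 * ∑ i, Real.log (y i) -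
      (a + b) / 2 * ∑ i, |Real.log (y i)|) := by
  simp_rw [min_rpow_rpow_neg_eq_exp hab (hy _), ← Real.exp_sum, sum_sub_distrib,
    mul_sum]

theorem one_add_add_two_mul_pow_le {R z : ℝ} (hR : 0 ≤ R) (hz : 0 ≤ z) {d n : ℕ} (hdn : d ≤ n) :
    (1 + (R + 2 * z)) ^ d ≤ (4 * (1 + R)) ^ n * (1 + z ^ n) := by
  have hB : 1 + (R + 2 * z) ≤ 2 * (1 + R) * (1 + z) := by nlinarith
  calc (1 + (R + 2 * z)) ^ d ≤ (2 * (1 + R) * (1 + z)) ^ n :=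
        (pow_le_pow_left₀ (by positivity) hB d).trans (pow_le_pow_right₀ (by nlinarith) hdn)
    _ = (2 * (1 + R)) ^ n * (1 + z) ^ n := mul_pow ..
    _ ≤ (2 * (1 + R)) ^ n * (2 ^ n * (1 + z ^ n)) := by
        gcongr
        refine (add_pow_le zero_le_one hz n).trans ?_
        rw [one_pow]
        gcongr
        exacts [one_le_two, Nat.sub_le n 1]
    _ = (4 * (1 + R)) ^ n * (1 + z ^ n) := by rw [← mul_assoc, ← mul_pow]; ring

theorem pi_norm_le_sum_abs {ι : Type*} [Fintype ι] (w : ι → ℝ) : ‖w‖ ≤ ∑ i, |w i| :=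
  (pi_norm_le_iff_of_nonneg (by positivity)).mpr fun i => (Real.norm_eq_abs _).trans_le <|
    single_le_sum (f := fun i => |w i|) (fun _ _ => abs_nonneg _) (mem_univ i)

namespace ZLattice

variable {E : Type*} [NormedAddCommGroup E] [NormedSpace ℝ E] [FiniteDimensional ℝ E]
  (L : Submodule ℤ E) [DiscreteTopology L]

theorem exists_card_le_of_forall_norm_le :
    ∃ A ≥ 0, ∀ ρ : ℝ, 0 ≤ ρ → ∀ s : Finset L, (∀ u ∈ s, ‖u‖ ≤ ρ) →
      (#s : ℝ) ≤ A * (1 + ρ) ^ finrank ℤ L := by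
  classical
  set d := finrank ℤ L
  let b := Module.finBasis ℤ L
  obtain ⟨ε, hε, hb⟩ := exists_forall_abs_repr_le_norm b
  refine ⟨(1 + 2 / ε) ^ d, by positivity, fun ρ hρ s hs => ?_⟩
  set M := ⌊ρ / ε⌋
  have hM : 0 ≤ M := Int.floor_nonneg.mpr (by positivity)
  let coords : L → Fin d → ℤ := fun u i => b.repr u i
  have hcoords : Set.InjOn coords s := fun u _ v _ huv =>
    b.repr.injective (Finsupp.ext (congrFun huv))
  have hbox : s.image coords ⊆ Fintype.piFinset fun _ => Icc (-M) M := by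
    simp only [subset_iff, mem_image, Fintype.mem_piFinset, mem_Icc, ← abs_le]
    rintro _ ⟨u, hu, rfl⟩ i
    rw [Int.le_floor, le_div_iff₀ hε, mul_comm]
    exact (hb u i).trans (hs u hu)
  have hside : ((#(Icc (-M) M) : ℕ) : ℝ) ≤ (1 + 2 / ε) * (1 + ρ) := by
    have hMρ : (M : ℝ) ≤ ρ / ε := Int.floor_le _
    have hcard : ((#(Icc (-M) M) : ℕ) : ℝ) = 2 * M + 1 := by
      rw [Int.card_Icc, show M + 1 - -M = 2 * M + 1 by ring]
      exact_mod_cast Int.toNat_of_nonneg (by omega)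
    rw [hcard]
    have : ρ / ε * 2 ≤ 2 / ε * (1 + ρ) := by
      rw [div_mul_eq_mul_div, div_mul_eq_mul_div, div_le_div_iff_of_pos_right hε]; nlinarith
    nlinarith
  calc (#s : ℝ) = #(s.image coords) := by rw [card_image_of_injOn hcoords]
    _ ≤ #(Fintype.piFinset fun _ : Fin d => Icc (-M) M) := by exact_mod_cast card_le_card hbox
    _ = ((#(Icc (-M) M) : ℕ) : ℝ) ^ d := by simp
    _ ≤ ((1 + 2 / ε) * (1 + ρ)) ^ d := by gcongr
    _ = (1 + 2 / ε) ^ d * (1 + ρ) ^ d := mul_pow ..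

theorem summable_exp_neg_mul_norm {δ : ℝ} (hδ : 0 < δ) :
    Summable fun u : L => Real.exp (-(δ * ‖u‖)) := by
  set n := finrank ℤ L + 1
  refine Summable.of_norm_bounded_eventually
    ((summable_norm_pow_inv L n (by omega)).mul_left (n.factorial / δ ^ n)) ?_
  filter_upwards [(Set.finite_singleton (0 : L)).compl_mem_cofinite] with u hu0
  have hu : 0 < ‖u‖ := norm_pos_iff.mpr hu0
  have hexp := Real.pow_div_factorial_le_exp (δ * ‖u‖) (by positivity) n
  rw [div_le_iff₀ (by positivity), mul_pow] at hexp
  rw [Real.norm_of_nonneg (Real.exp_nonneg _), Real.exp_neg, inv_pow, ← div_eq_mul_inv,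
    div_div, inv_le_comm₀ (Real.exp_pos _) (by positivity), inv_div,
    div_le_iff₀ (by positivity)]
  linarith

theorem exists_sum_exp_neg_mul_max_le {c : ℝ} (hc : 0 < c) :
    ∃ C ≥ 0, ∀ ρ : ℝ, 0 ≤ ρ → ∀ s : Finset L,
      ∑ u ∈ s, Real.exp (-(c * max 0 (‖u‖ - ρ))) ≤ C * (1 + ρ) ^ finrank ℤ L := by
  classical
  obtain ⟨A, hA0, hA⟩ := exists_card_le_of_forall_norm_le L
  have hsum := summable_exp_neg_mul_norm L (half_pos hc)
  set σ := ∑' u : L, Real.exp (-(c / 2 * ‖u‖))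
  refine ⟨A * 2 ^ finrank ℤ L + σ, by positivity, fun ρ hρ s => ?_⟩
  have hterm (u : L) : Real.exp (-(c * max 0 (‖u‖ - ρ))) ≤
      (if ‖u‖ ≤ 2 * ρ then 1 else 0) + Real.exp (-(c / 2 * ‖u‖)) := by
    split_ifs with hu
    · have : Real.exp (-(c * max 0 (‖u‖ - ρ))) ≤ 1 :=
        Real.exp_le_one_iff.mpr (neg_nonpos.mpr (by positivity))
      linarith [Real.exp_pos (-(c / 2 * ‖u‖))]
    · rw [zero_add, Real.exp_le_exp, neg_le_neg_iff, div_mul_eq_mul_div, div_le_iff₀ two_pos]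
      nlinarith [le_max_right 0 (‖u‖ - ρ)]
  have hnear : (#(s.filter fun u => ‖u‖ ≤ 2 * ρ) : ℝ) ≤
      A * 2 ^ finrank ℤ L * (1 + ρ) ^ finrank ℤ L := by
    refine (hA (2 * ρ) (by positivity) _ fun u hu => (mem_filter.mp hu).2).trans ?_
    rw [mul_assoc, ← mul_pow]
    gcongr
    linarith
  have hfar : ∑ u ∈ s, Real.exp (-(c / 2 * ‖u‖)) ≤ σ * (1 + ρ) ^ finrank ℤ L :=
    (hsum.sum_le_tsum s fun _ _ => (Real.exp_pos _).le).trans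
      (le_mul_of_one_le_right (tsum_nonneg fun _ => (Real.exp_pos _).le)
        (one_le_pow₀ (by linarith)))
  calc ∑ u ∈ s, Real.exp (-(c * max 0 (‖u‖ - ρ)))
      ≤ ∑ u ∈ s, ((if ‖u‖ ≤ 2 * ρ then 1 else 0) + Real.exp (-(c / 2 * ‖u‖))) :=
        sum_le_sum fun u _ => hterm u
    _ = #(s.filter fun u => ‖u‖ ≤ 2 * ρ) + ∑ u ∈ s, Real.exp (-(c / 2 * ‖u‖)) := by
      rw [sum_add_distrib, sum_boole]
    _ ≤ _ := by linarith

theorem finrank_le_finrank_of_forall_mem {V : Submodule ℝ E} (hLV : ∀ v ∈ L, v ∈ V) :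
    finrank ℤ L ≤ finrank ℝ V := by
  have h := Real.finrank_eq_int_finrank_of_discrete (s := (L : Set E))
    (by rwa [Submodule.span_eq])
  rw [Set.finrank, Set.finrank, Submodule.span_eq] at h
  exact h ▸ Submodule.finrank_mono (Submodule.span_le.mpr hLV)

end ZLattice

theorem finrank_lt_card_of_forall_sum_eq_zero {ι : Type*} [Fintype ι] [Nonempty ι]
    (L : Submodule ℤ (ι → ℝ)) [DiscreteTopology L] (hL : ∀ v ∈ L, ∑ i, v i = 0) :
    finrank ℤ L < Fintype.card ι := by
  let sum : (ι → ℝ) →ₗ[ℝ] ℝ := ∑ i, LinearMap.proj i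
  have hsum (v : ι → ℝ) : sum v = ∑ i, v i := by simp [sum]
  have hker : LinearMap.ker sum ≠ ⊤ := fun h => by
    have := hsum 1 ▸ LinearMap.mem_ker.mp (h ▸ Submodule.mem_top : (1 : ι → ℝ) ∈ _)
    simp at this
  calc finrank ℤ L ≤ finrank ℝ (LinearMap.ker sum) :=
        ZLattice.finrank_le_finrank_of_forall_mem L fun v hv => by simp [hsum, hL v hv]
    _ < finrank ℝ (ι → ℝ) := Submodule.finrank_lt hker
    _ = Fintype.card ι := finrank_fintype_fun_eq_card ℝ

theorem AddSubgroup.exists_mem_norm_sub_le_of_cocompact {ι : Type*} [Fintype ι] [Nonempty ι]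
    (L : AddSubgroup (ι → ℝ))
    (hcocompact : ∃ K : Set (ι → ℝ), IsCompact K ∧
      ∀ v : ι → ℝ, ∑ i, v i = 0 → ∃ u ∈ L, v - u ∈ K) :
    ∃ R ≥ 0, ∀ t : ι → ℝ, ∃ u ∈ L, ‖t - u‖ ≤ R + |∑ i, t i| := by
  obtain ⟨K, hK, hcover⟩ := hcocompact
  obtain ⟨R, hR, hKR⟩ := hK.isBounded.exists_pos_norm_le
  refine ⟨R, hR.le, fun t => ?_⟩
  set T := ∑ i, t i
  set n : ℝ := (Fintype.card ι : ℝ)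
  have hn : 1 ≤ n := Nat.one_le_cast.mpr Fintype.card_pos
  obtain ⟨u, hu, hK⟩ := hcover (t - fun _ => T / n) (by
    simp [sum_sub_distrib, n, T, mul_div_cancel₀ _ (by positivity : n ≠ 0)])
  refine ⟨u, hu, ?_⟩
  calc ‖t - u‖ = ‖(t - (fun _ => T / n) - u) + fun _ => T / n‖ := by congr 1; abel
    _ ≤ R + |T / n| :=
        norm_add_le_of_le (hKR _ hK) ((pi_norm_const_le _).trans_eq (Real.norm_eq_abs _))
    _ ≤ R + |T| := by
      rw [abs_div, abs_of_pos (by positivity : 0 < n)]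
      gcongr
      exact div_le_self (abs_nonneg T) hn

theorem exists_sum_exp_neg_mul_sum_abs_add_le {ι : Type*} [Fintype ι] [Nonempty ι]
    (L : AddSubgroup (ι → ℝ)) (hL : ∀ v ∈ L, ∑ i, v i = 0) [DiscreteTopology L]
    (hcocompact : ∃ K : Set (ι → ℝ), IsCompact K ∧
      ∀ v : ι → ℝ, ∑ i, v i = 0 → ∃ u ∈ L, v - u ∈ K)
    {c : ℝ} (hc : 0 < c) :
    ∃ C ≥ 0, ∀ t : ι → ℝ, ∀ s : Finset L,
      ∑ u ∈ s, Real.exp (-(c * ∑ i, |(u : ι → ℝ) i + t i|)) ≤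
        C * (1 + |∑ i, t i| ^ (Fintype.card ι - 1)) * Real.exp (-(c * |∑ i, t i|)) := by
  obtain ⟨R, hR, hRt⟩ := AddSubgroup.exists_mem_norm_sub_le_of_cocompact L hcocompact
  have : DiscreteTopology L.toIntSubmodule := inferInstanceAs (DiscreteTopology L)
  obtain ⟨C, hC0, hC⟩ := ZLattice.exists_sum_exp_neg_mul_max_le L.toIntSubmodule hc
  have hd : finrank ℤ L.toIntSubmodule ≤ Fintype.card ι - 1 := by
    have := finrank_lt_card_of_forall_sum_eq_zero L.toIntSubmodule hL
    omega
  refine ⟨C * (4 * (1 + R)) ^ (Fintype.card ι - 1), by positivity, fun t s => ?_⟩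
  set T := ∑ i, t i
  obtain ⟨u₀, hu₀, hu₀t⟩ := hRt t
  set v₀ : L := ⟨u₀, hu₀⟩
  set ρ := R + 2 * |T|
  have hterm (u : L) : Real.exp (-(c * ∑ i, |(u : ι → ℝ) i + t i|)) ≤
      Real.exp (-(c * |T|)) * Real.exp (-(c * max 0 (‖u + v₀‖ - ρ))) := by
    set W := ∑ i, |(u : ι → ℝ) i + t i|
    have hT : |T| ≤ W := by
      simpa [sum_add_distrib, hL u u.2] using
        abs_sum_le_sum_abs (fun i => (u : ι → ℝ) i + t i) univ
    have hnorm : ‖u + v₀‖ ≤ W + (R + |T|) :=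
      calc ‖u + v₀‖ = ‖((u : ι → ℝ) + t) - (t - u₀)‖ := by
            rw [AddSubgroup.coe_norm, AddSubgroup.coe_add]; congr 1; abel
        _ ≤ ‖(u : ι → ℝ) + t‖ + ‖t - u₀‖ := norm_sub_le _ _
        _ ≤ W + (R + |T|) := add_le_add (pi_norm_le_sum_abs _) hu₀t
    have : max 0 (‖u + v₀‖ - ρ) ≤ W - |T| := max_le (by linarith) (by linarith)
    rw [← Real.exp_add, Real.exp_le_exp]
    nlinarith
  calc ∑ u ∈ s, Real.exp (-(c * ∑ i, |(u : ι → ℝ) i + t i|))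
      ≤ ∑ u ∈ s, Real.exp (-(c * |T|)) * Real.exp (-(c * max 0 (‖u + v₀‖ - ρ))) :=
        sum_le_sum fun u _ => hterm u
    _ = Real.exp (-(c * |T|)) * ∑ v ∈ s.map (Equiv.addRight v₀).toEmbedding,
          Real.exp (-(c * max 0 (‖v‖ - ρ))) := by rw [mul_sum, sum_map]; rfl
    _ ≤ Real.exp (-(c * |T|)) * (C * (1 + ρ) ^ finrank ℤ L.toIntSubmodule) := by
        gcongr
        exact hC ρ (by positivity) _
    _ ≤ Real.exp (-(c * |T|)) * (C * ((4 * (1 + R)) ^ (Fintype.card ι - 1) *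
          (1 + |T| ^ (Fintype.card ι - 1)))) := by
        gcongr
        exact one_add_add_two_mul_pow_le hR (abs_nonneg T) hd
    _ = _ := by ring

/-- A version of the Bruggeman–Miatello lemma: summing local bounds
`∏ min(xᵢᵃ, xᵢ⁻ᵇ)` over a discrete cocompact subgroup of the norm-one
hypersurface (written additively via `exp` on an additive subgroup `L` of the
hyperplane `∑ vᵢ = 0`) loses only a power of the logarithm of the total norm. -/
theorem stmt7 (a b : ℝ) (hab : 0 < a + b) (r : ℕ) (hr : 1 ≤ r)
    (L : AddSubgroup (Fin r → ℝ))
    (hL : ∀ v ∈ L, ∑ i, v i = 0)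
    (hdisc : DiscreteTopology L)
    (hcocompact : ∃ Kc : Set (Fin r → ℝ), IsCompact Kc ∧
      ∀ v : Fin r → ℝ, (∑ i, v i = 0) → ∃ u ∈ L, v - u ∈ Kc) :
    ∃ C : ℝ, ∀ g : (Fin r → ℝ) → ℂ,
      (∀ x : Fin r → ℝ, (∀ i, 0 < x i) →
        ‖g x‖ ≤ ∏ i, min ((x i) ^ a) ((x i) ^ (-b))) →
      ∀ x : Fin r → ℝ, (∀ i, 0 < x i) →
        ∑' u : L, ‖g (fun i => Real.exp ((u : Fin r → ℝ) i) * x i)‖ ≤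
          C * (1 + |Real.log (∏ i, x i)| ^ (r - 1)) *
            min ((∏ i, x i) ^ a) ((∏ i, x i) ^ (-b)) := by
  have : Nonempty (Fin r) := ⟨⟨0, hr⟩⟩
  obtain ⟨C, hC0, hC⟩ :=
    exists_sum_exp_neg_mul_sum_abs_add_le L hL hcocompact (c := (a + b) / 2) (by linarith)
  refine ⟨C, fun g hg x hx => ?_⟩
  set t : Fin r → ℝ := fun i => Real.log (x i)
  have hT : Real.log (∏ i, x i) = ∑ i, t i := Real.log_prod (fun i _ => (hx i).ne')
  have hterm (u : L) : ‖g (fun i => Real.exp ((u : Fin r → ℝ) i) * x i)‖ ≤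
      Real.exp ((a - b) / 2 * ∑ i, t i) *
        Real.exp (-((a + b) / 2 * ∑ i, |(u : Fin r → ℝ) i + t i|)) := by
    refine (hg _ fun i => by have := hx i; positivity).trans_eq ?_
    rw [prod_min_rpow_rpow_neg_eq_exp hab.le fun i => by have := hx i; positivity,
      ← Real.exp_add]
    simp only [Real.log_mul (Real.exp_ne_zero _) (hx _).ne', Real.log_exp, sum_add_distrib,
      hL u u.2, zero_add, t]
    ring_nf
  rw [min_rpow_rpow_neg_eq_exp hab.le (prod_pos fun i _ => hx i), hT]
  refine tsum_le_of_sum_le' (by positivity) fun s => ?_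
  calc ∑ u ∈ s, ‖g (fun i => Real.exp ((u : Fin r → ℝ) i) * x i)‖
      ≤ Real.exp ((a - b) / 2 * ∑ i, t i) *
          ∑ u ∈ s, Real.exp (-((a + b) / 2 * ∑ i, |(u : Fin r → ℝ) i + t i|)) := by
        rw [mul_sum]; exact sum_le_sum fun u _ => hterm u
    _ ≤ Real.exp ((a - b) / 2 * ∑ i, t i) * (C * (1 + |∑ i, t i| ^ (r - 1)) *
          Real.exp (-((a + b) / 2 * |∑ i, t i|))) := by
        gcongr
        simpa using hC t s
    _ = _ := by rw [mul_comm, mul_assoc, ← Real.exp_add]; ring_nf
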